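/- For integers 1 ≤ i ≤ j+2, the path matching polynomials satisfy p_{i-2}(x)·p_{j+2}(x) − p_i(x)·p_j(x) = (−1)^i · x^{i-1} · p_{j−i+1}(x). -/
import Mathlib


open Polynomial

/-- Matching generating polynomial of the path on `k` vertices, via its recurrence. -/
noncomputable def ppoly : ℕ → Polynomial ℚ
  | 0 => 1
  | 1 => 1
  | (k+2) => ppoly (k+1) + Polynomial.X * ppoly k

/-- Extension of `ppoly` to integer indices, with `p_{-1} = 0` (and `0` below that). -/
noncomputable def pz (k : ℤ) : Polynomial ℚ := if 0 ≤ k then ppoly k.toNat else 0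

lemma pz_ofNat (n : ℕ) : pz (n : ℤ) = ppoly n := by simp [pz]

lemma pz_neg_one : pz (-1) = 0 := by simp [pz]

lemma pz_step (m : ℤ) (hm : 0 ≤ m) : pz (m + 1) - pz m = Polynomial.X * pz (m - 1) := by
  rcases eq_or_lt_of_le hm with h | h
  · subst m
    simp [pz, ppoly]
  · obtain ⟨n, rfl⟩ : ∃ n : ℕ, m = (n : ℤ) + 1 := ⟨(m - 1).toNat, by omega⟩
    have : ((n : ℤ) + 1 + 1) = ((n + 2 : ℕ) : ℤ) := by push_cast; ring
    rw [show ((n : ℤ) + 1 - 1) = ((n:ℕ) : ℤ) by ring, this, pz_ofNat,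
      show (n : ℤ) + 1 = ((n + 1 : ℕ) : ℤ) by push_cast; ring, pz_ofNat, pz_ofNat]
    show ppoly (n + 2) - _ = _
    rw [ppoly]
    ring

theorem key : ∀ i : ℕ, ∀ j : ℕ, 1 ≤ i → (i : ℤ) ≤ (j : ℤ) + 2 →
    pz ((i : ℤ) - 2) * ppoly (j + 2) - ppoly i * ppoly j =
      (-1) ^ i * Polynomial.X ^ (i - 1) * pz ((j : ℤ) - i + 1) := by
  intro i
  induction i using Nat.strong_induction_on with
  | _ i IH =>
    match i with
    | 0 => intro j h1 h2; omega
    | 1 =>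
      intro j h1 h2
      have : ((1:ℕ):ℤ) - 2 = -1 := by norm_num
      rw [this, pz_neg_one]
      simp [ppoly, pz_ofNat, show ((j:ℤ) - 1 + 1) = (j:ℤ) by ring]
    | 2 =>
      intro j h1 h2
      have e0 : ((2:ℕ):ℤ) - 2 = ((0:ℕ):ℤ) := by norm_num
      rw [e0, pz_ofNat]
      have hstep := pz_step ((j:ℤ)) (by positivity)
      rw [show ((j:ℤ) - ((2:ℕ):ℤ) + 1) = (j:ℤ) - 1 by push_cast; ring]
      rw [show ((j:ℤ) + 1) = ((j+1:ℕ):ℤ) by push_cast; ring, pz_ofNat, pz_ofNat] at hstep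
      have h0 : ppoly 0 = 1 := rfl
      have hp2 : ppoly 2 = 1 + Polynomial.X := by
        show ppoly (0+2) = _; rw [ppoly]; simp [ppoly]
      have hp : ppoly (j+2) = ppoly (j+1) + Polynomial.X * ppoly j := rfl
      rw [h0, hp2, hp]
      linear_combination hstep
    | (k+3) =>
      intro j h1 h2
      have hij : k + 1 ≤ j := by omega
      have IH1 := IH (k+2) (by omega) j (by omega) (by omega)
      have IH2 := IH (k+1) (by omega) j (by omega) (by omega)
      have hrec : ppoly (k+3) = ppoly (k+2) + Polynomial.X * ppoly (k+1) := rfl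
      have hrec2 : ppoly (k+2) = ppoly (k+1) + Polynomial.X * ppoly k := rfl
      have e1 : ((k+3:ℕ):ℤ) - 2 = ((k+1:ℕ):ℤ) := by push_cast; ring
      have e2 : ((k+2:ℕ):ℤ) - 2 = ((k:ℕ):ℤ) := by push_cast; ring
      have e3 : ((k+1:ℕ):ℤ) - 2 = ((k:ℕ):ℤ) - 1 := by push_cast; ring
      rw [e1, pz_ofNat] at *
      rw [e2, pz_ofNat] at IH1
      rw [e3] at IH2
      -- LHS(k+3) = LHS(k+2) + X * LHS(k+1)
      have combo : ppoly (k+1) * ppoly (j+2) - ppoly (k+3) * ppoly j =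
          (ppoly k * ppoly (j+2) - ppoly (k+2) * ppoly j)
          + Polynomial.X * (pz ((k:ℤ) - 1) * ppoly (j+2) - ppoly (k+1) * ppoly j) := by
        rcases Nat.eq_zero_or_pos k with rfl | hk
        · rw [show ((0:ℕ):ℤ) - 1 = -1 by norm_num, pz_neg_one]
          show ppoly 1 * _ - ppoly 3 * _ = (ppoly 0 * _ - ppoly 2 * _) + _
          rw [show (3:ℕ) = 1 + 2 from rfl, ppoly, show (2:ℕ) = 0 + 2 from rfl, ppoly]
          simp [ppoly]; ring
        · rw [show ((k:ℤ) - 1) = ((k-1:ℕ):ℤ) by omega, pz_ofNat]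
          have : ppoly (k+1) = ppoly k + Polynomial.X * ppoly (k-1) := by
            conv_lhs => rw [show k + 1 = (k-1) + 2 by omega, ppoly]
            rw [show k - 1 + 1 = k by omega]
          rw [hrec, hrec2, this]
          ring
      rw [combo, IH1, IH2]
      -- now pz arithmetic: need pz(j-(k+1)+1) stuff
      have hstep := pz_step ((j:ℤ) - (k+1)) (by omega)
      have : ((j:ℤ) - ((k+1:ℕ):ℤ) + 1) = ((j:ℤ) - (k+1)) + 1 := by push_cast; ring
      rw [this] at IH2 ⊢
      have e4 : ((j:ℤ) - ((k+2:ℕ):ℤ) + 1) = ((j:ℤ) - (k+1)) := by push_cast; ring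
      have e5 : ((j:ℤ) - ((k+3:ℕ):ℤ) + 1) = ((j:ℤ) - (k+1)) - 1 := by push_cast; ring
      rw [e5]
      have hs : pz ((j:ℤ) - (k+1) + 1) = pz ((j:ℤ) - (k+1)) + Polynomial.X * pz ((j:ℤ) - (k+1) - 1) := by
        linear_combination hstep
      rw [e4, hs]
      rw [show k + 3 - 1 = (k+2-1) + 1 by omega, show k+2-1 = (k+1-1)+1 by omega]
      push_cast [pow_succ]
      ring

/-- For integers `1 ≤ i ≤ j+2`:
`p_{i-2} p_{j+2} − p_i p_j = (−1)^i x^{i-1} p_{j−i+1}`. -/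
theorem ppoly_two_step_identity (i j : ℕ) (h1 : 1 ≤ i) (h2 : (i : ℤ) ≤ (j : ℤ) + 2) :
    pz ((i : ℤ) - 2) * ppoly (j + 2) - ppoly i * ppoly j =
      (-1) ^ i * Polynomial.X ^ (i - 1) * pz ((j : ℤ) - i + 1) := key i j h1 h2
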